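/- The image under ρ of the open polytope 𝔓^{n-1} = {(y_1,...,y_n) ∈ W^{n-1} : max(y_1,...,y_n) − min(y_1,...,y_n) < 1} equals the open simplex T(n) = {(r_1,...,r_{n-1}) ∈ ℝ^{n-1}_{≥0} : r_1 + ... + r_{n-1} < n}. -/

import Mathlib

/-- The sorting map ρ : ℝ^{n+1} → ℝ^n_{≥0}. -/
noncomputable def rho (n : ℕ) (y : Fin (n + 1) → ℝ) : Fin n → ℝ :=
  fun i =>
    ((n : ℝ) + 1) *
      (y (Tuple.sort y i.succ) - y (Tuple.sort y i.castSucc))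

/-!
`rho n y` only records the consecutive gaps of the sorted tuple, scaled by `n + 1`; they are
nonnegative and telescope to `(n + 1) (max y - min y)`. Conversely, any nonnegative gap vector
`r` is realised by the partial sums of `r / (n + 1)`, which are already sorted, shifted by their
mean to land in `∑ y = 0`.
-/

open Finset

theorem Fin.sum_succ_sub_castSucc {M : Type*} [AddCommGroup M] {n : ℕ} (g : Fin (n + 1) → M) :
    ∑ i : Fin n, (g i.succ - g i.castSucc) = g (Fin.last n) - g 0 := by
  have h : g 0 + ∑ i : Fin n, g i.succ = ∑ i : Fin n, g i.castSucc + g (Fin.last n) :=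
    (Fin.sum_univ_succ g).symm.trans (Fin.sum_univ_castSucc g)
  rw [sum_sub_distrib, sub_eq_sub_iff_add_eq_add, add_comm, h, add_comm]

theorem Finset.sum_sub_average_eq_zero {ι K : Type*} [Fintype ι] [Nonempty ι] [Field K]
    [CharZero K] (f : ι → K) : ∑ i, (f i - (∑ j, f j) / Fintype.card ι) = 0 := by
  rw [sum_sub_distrib, sum_const, card_univ, nsmul_eq_mul,
    mul_div_cancel₀ _ (Nat.cast_ne_zero.2 Fintype.card_ne_zero), sub_self]

namespace Tuple

variable {α : Type*} [LinearOrder α] {n : ℕ}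

theorem sup'_univ_eq_apply_sort_last (f : Fin (n + 1) → α) :
    univ.sup' univ_nonempty f = f (sort f (Fin.last n)) := by
  refine le_antisymm (sup'_le _ _ fun i _ => ?_) (le_sup' f (mem_univ _))
  simpa using monotone_sort f (Fin.le_last ((sort f).symm i))

theorem inf'_univ_eq_apply_sort_zero (f : Fin (n + 1) → α) :
    univ.inf' univ_nonempty f = f (sort f 0) := by
  refine le_antisymm (inf'_le f (mem_univ _)) (le_inf' _ _ fun i _ => ?_)
  simpa using monotone_sort f (Fin.zero_le ((sort f).symm i))

end Tuple

section rho

variable {n : ℕ}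

theorem rho_nonneg (y : Fin (n + 1) → ℝ) (i : Fin n) : 0 ≤ rho n y i :=
  mul_nonneg (by positivity) (sub_nonneg.2 (Tuple.monotone_sort y (Fin.castSucc_le_succ i)))

theorem sum_rho (y : Fin (n + 1) → ℝ) :
    ∑ i, rho n y i =
      ((n : ℝ) + 1) * (univ.sup' univ_nonempty y - univ.inf' univ_nonempty y) := by
  rw [Tuple.sup'_univ_eq_apply_sort_last, Tuple.inf'_univ_eq_apply_sort_zero]
  simp only [rho, ← mul_sum]
  exact congrArg _ (Fin.sum_succ_sub_castSucc (y ∘ Tuple.sort y))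

theorem rho_of_monotone {y : Fin (n + 1) → ℝ} (hy : Monotone y) (i : Fin n) :
    rho n y i = ((n : ℝ) + 1) * (y i.succ - y i.castSucc) := by
  simp [rho, Tuple.sort_eq_refl_iff_monotone.2 hy]

noncomputable def rhoSection (n : ℕ) (r : Fin n → ℝ) : Fin (n + 1) → ℝ :=
  let s := Fin.partialSum fun i => r i / ((n : ℝ) + 1)
  fun j => s j - (∑ k, s k) / ((n : ℝ) + 1)

theorem sum_rhoSection (r : Fin n → ℝ) : ∑ j, rhoSection n r j = 0 := by
  have h := Finset.sum_sub_average_eq_zero (Fin.partialSum fun i => r i / ((n : ℝ) + 1))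
  rw [Fintype.card_fin, Nat.cast_succ] at h
  exact h

theorem rhoSection_succ_sub_castSucc (r : Fin n → ℝ) (i : Fin n) :
    rhoSection n r i.succ - rhoSection n r i.castSucc = r i / ((n : ℝ) + 1) := by
  simp [rhoSection, Fin.partialSum_succ]

theorem monotone_rhoSection {r : Fin n → ℝ} (hr : ∀ i, 0 ≤ r i) : Monotone (rhoSection n r) :=
  Fin.monotone_iff_le_succ.2 fun i => sub_nonneg.1 <| by
    rw [rhoSection_succ_sub_castSucc]; exact div_nonneg (hr i) (by positivity)

theorem rho_rhoSection {r : Fin n → ℝ} (hr : ∀ i, 0 ≤ r i) : rho n (rhoSection n r) = r := by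
  funext i
  rw [rho_of_monotone (monotone_rhoSection hr), rhoSection_succ_sub_castSucc,
    mul_div_cancel₀ _ (by positivity)]

end rho

/-- ρ(𝔓^{n}) = T(n+1), where
`𝔓 = {y ∈ W : max y - min y < 1}` and `T(a) = {r ≥ 0 : Σ r_i < a}`. -/
theorem rho_image_P_eq_T (n : ℕ) :
    rho n ''
        {y : Fin (n + 1) → ℝ |
          (∑ i, y i) = 0 ∧
            Finset.univ.sup' Finset.univ_nonempty y -
                Finset.univ.inf' Finset.univ_nonempty y < 1} =
      {r : Fin n → ℝ | (∀ i, 0 ≤ r i) ∧ ∑ i, r i < (n : ℝ) + 1} := by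
  have hn : (0 : ℝ) < n + 1 := by positivity
  ext r
  constructor
  · rintro ⟨y, ⟨-, hwidth⟩, rfl⟩
    refine ⟨rho_nonneg y, ?_⟩
    rw [sum_rho]
    exact mul_lt_of_lt_one_right hn hwidth
  · rintro ⟨hr, hsum⟩
    refine ⟨rhoSection n r, ⟨sum_rhoSection r, ?_⟩, rho_rhoSection hr⟩
    have hwidth := sum_rho (rhoSection n r)
    rw [rho_rhoSection hr] at hwidth
    exact (mul_lt_iff_lt_one_right hn).1 (hwidth ▸ hsum)
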